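/- arXiv:1808.03837 — 2 statements merged into one kernel-verified Lean document; each statement's English description precedes it below -/
import Mathlib

section
/- Let m₁, m₂, m₃ > 0, let p₁, p₂, p₃ ∈ ℝ² be distinct, and let x₀ ∈ ℝ⁴ have position component not in {p₁, p₂, p₃}. Suppose xᵘ : ℝ → ℝ⁴ and xˢ : ℝ → ℝ⁴ are differentiable, satisfy (xᵘ)′(t) = f(xᵘ(t)) and (xˢ)′(t) = f(xˢ(t)) for all t ∈ ℝ with position components avoiding {p₁, p₂, p₃}, and satisfy xᵘ(t) → x₀ as t → −∞ and xˢ(t) → x₀ as t → +∞. If the states q = xᵘ(0) and p = xˢ(0) satisfy q₁ = p₁, q₂ = p₂, q₃ = p₃, and q₄ · p₄ > 0, then q = p; that is, the orbit of xᵘ meets the orbit of xˢ, so this point lies on an orbit homoclinic to x₀. -/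
/-!
Along any solution the Jacobi integral `E = -(ẋ² + ẏ²) + 2Ω(x, y)` is constant, since the
Coriolis terms `±2ẋẏ` cancel in `dE/dt`. As `E` is continuous at `x₀`, both orbits lie in the
energy level `E(x₀)`; hence `q` and `p`, which share position and `ẋ`, have `q₄² = p₄²`, and the
sign condition gives `q₄ = p₄`.
-/

open Filter Topology

/-- Euclidean distance in the configuration plane. -/
noncomputable def rdist (v p : ℝ × ℝ) : ℝ :=
  Real.sqrt ((v.1 - p.1) ^ 2 + (v.2 - p.2) ^ 2)

/-- The effective potential `Ω` of the CRFBP. -/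
noncomputable def Omega (m₁ m₂ m₃ : ℝ) (p₁ p₂ p₃ : ℝ × ℝ) (v : ℝ × ℝ) : ℝ :=
  (v.1 ^ 2 + v.2 ^ 2) / 2 + m₁ / rdist v p₁ + m₂ / rdist v p₂ + m₃ / rdist v p₃

/-- The CRFBP vector field on states `(x, ẋ, y, ẏ)`. -/
noncomputable def crfbp (m₁ m₂ m₃ : ℝ) (p₁ p₂ p₃ : ℝ × ℝ) (v : Fin 4 → ℝ) :
    Fin 4 → ℝ :=
  ![v 1,
    2 * v 3 + deriv (fun x => Omega m₁ m₂ m₃ p₁ p₂ p₃ (x, v 2)) (v 0),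
    v 3,
    -2 * v 1 + deriv (fun y => Omega m₁ m₂ m₃ p₁ p₂ p₃ (v 0, y)) (v 2)]

namespace RotatingFrame

variable (Φ : ℝ × ℝ → ℝ)

/-- The planar rotating-frame field with potential `Φ`; `crfbp m₁ m₂ m₃ p₁ p₂ p₃` is
definitionally `field (Omega m₁ m₂ m₃ p₁ p₂ p₃)`. -/
noncomputable def field (v : Fin 4 → ℝ) : Fin 4 → ℝ :=
  ![v 1,
    2 * v 3 + deriv (fun x => Φ (x, v 2)) (v 0),
    v 3,
    -2 * v 1 + deriv (fun y => Φ (v 0, y)) (v 2)]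

noncomputable def jacobi (v : Fin 4 → ℝ) : ℝ :=
  -(v 1 ^ 2 + v 3 ^ 2) + 2 * Φ (v 0, v 2)

variable {Φ}

lemma jacobi_continuousAt {w : Fin 4 → ℝ} (hΦ : ContinuousAt Φ (w 0, w 2)) :
    ContinuousAt (jacobi Φ) w := by
  have : ContinuousAt (fun v : Fin 4 → ℝ => Φ (v 0, v 2)) w :=
    hΦ.comp (f := fun v : Fin 4 → ℝ => (v 0, v 2)) (by fun_prop)
  unfold jacobi
  fun_prop

lemma hasDerivAt_comp_prodMk {L : ℝ × ℝ →L[ℝ] ℝ} {a b : ℝ → ℝ} {a' b' t : ℝ}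
    (hΦ : HasFDerivAt Φ L (a t, b t)) (ha : HasDerivAt a a' t) (hb : HasDerivAt b b' t) :
    HasDerivAt (fun s => Φ (a s, b s)) (a' * L (1, 0) + b' * L (0, 1)) t := by
  have hsplit : ((a', b') : ℝ × ℝ) = a' • ((1 : ℝ), (0 : ℝ)) + b' • ((0 : ℝ), (1 : ℝ)) :=
    Prod.ext (by simp) (by simp)
  have := hΦ.comp_hasDerivAt t (ha.prodMk hb)
  rw [hsplit, map_add, map_smul, map_smul] at this
  exact this

lemma hasDerivAt_jacobi_comp_zero {x : ℝ → Fin 4 → ℝ} {t : ℝ}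
    (hx : HasDerivAt x (field Φ (x t)) t) (hΦ : DifferentiableAt ℝ Φ (x t 0, x t 2)) :
    HasDerivAt (fun s => jacobi Φ (x s)) 0 t := by
  set L := fderiv ℝ Φ (x t 0, x t 2)
  have hL := hΦ.hasFDerivAt
  have hcoord : ∀ i, HasDerivAt (fun s => x s i) (field Φ (x t) i) t := hasDerivAt_pi.1 hx
  have hDx : deriv (fun a => Φ (a, x t 2)) (x t 0) = L (1, 0) := by
    simpa using (hasDerivAt_comp_prodMk hL (hasDerivAt_id _) (hasDerivAt_const _ _)).deriv
  have hDy : deriv (fun b => Φ (x t 0, b)) (x t 2) = L (0, 1) := by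
    simpa using (hasDerivAt_comp_prodMk hL (hasDerivAt_const _ _) (hasDerivAt_id _)).deriv
  have h₀ := hcoord 0
  have h₁ := hcoord 1
  have h₂ := hcoord 2
  have h₃ := hcoord 3
  simp only [field, hDx, hDy, Matrix.cons_val] at h₀ h₁ h₂ h₃
  have hJ := ((h₁.fun_pow 2).add (h₃.fun_pow 2)).neg.add
    ((hasDerivAt_comp_prodMk hL h₀ h₂).const_mul 2)
  refine hJ.congr_deriv ?_
  norm_num
  ring

lemma jacobi_comp_eq {x : ℝ → Fin 4 → ℝ} (hx : ∀ t, HasDerivAt x (field Φ (x t)) t)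
    (hΦ : ∀ t, DifferentiableAt ℝ Φ (x t 0, x t 2)) (s t : ℝ) :
    jacobi Φ (x s) = jacobi Φ (x t) :=
  is_const_of_deriv_eq_zero (fun u => (hasDerivAt_jacobi_comp_zero (hx u) (hΦ u)).differentiableAt)
    (fun u => (hasDerivAt_jacobi_comp_zero (hx u) (hΦ u)).deriv) s t

lemma eq_of_jacobi_eq {q p : Fin 4 → ℝ} (h₀ : q 0 = p 0) (h₁ : q 1 = p 1) (h₂ : q 2 = p 2)
    (h₃ : 0 < q 3 * p 3) (hE : jacobi Φ q = jacobi Φ p) : q = p := by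
  have hsq : q 3 ^ 2 = p 3 ^ 2 := by
    simp only [jacobi, h₀, h₁, h₂] at hE
    linarith
  have h₃' : q 3 = p 3 :=
    (sq_eq_sq_iff_eq_or_eq_neg.1 hsq).resolve_right fun h => by nlinarith
  funext i
  fin_cases i <;> assumption

end RotatingFrame

lemma ContinuousAt.apply_eq_of_tendsto_of_const {α X Y : Type*} [TopologicalSpace X]
    [TopologicalSpace Y] [T2Space Y] {l : Filter α} [l.NeBot] {x : α → X} {x₀ : X} {E : X → Y}
    (hE : ContinuousAt E x₀) (hx : Tendsto x l (𝓝 x₀)) (hconst : ∀ s t, E (x s) = E (x t))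
    (a : α) : E (x a) = E x₀ :=
  tendsto_nhds_unique (tendsto_const_nhds.congr (hconst a)) (hE.tendsto.comp hx)

lemma sq_sub_add_sq_sub_pos {v p : ℝ × ℝ} (h : v ≠ p) :
    0 < (v.1 - p.1) ^ 2 + (v.2 - p.2) ^ 2 := by
  have : v.1 - p.1 ≠ 0 ∨ v.2 - p.2 ≠ 0 := by
    contrapose! h
    exact Prod.ext (sub_eq_zero.1 h.1) (sub_eq_zero.1 h.2)
  rcases this with h | h <;> positivity

lemma rdist_pos {v p : ℝ × ℝ} (h : v ≠ p) : 0 < rdist v p :=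
  Real.sqrt_pos.2 (sq_sub_add_sq_sub_pos h)

lemma differentiableAt_rdist {v p : ℝ × ℝ} (h : v ≠ p) :
    DifferentiableAt ℝ (fun w => rdist w p) v :=
  (by fun_prop : DifferentiableAt ℝ (fun w : ℝ × ℝ => (w.1 - p.1) ^ 2 + (w.2 - p.2) ^ 2) v).sqrt
    (sq_sub_add_sq_sub_pos h).ne'

lemma differentiableAt_omega {m₁ m₂ m₃ : ℝ} {p₁ p₂ p₃ v : ℝ × ℝ}
    (hv : v ∉ ({p₁, p₂, p₃} : Set (ℝ × ℝ))) :
    DifferentiableAt ℝ (Omega m₁ m₂ m₃ p₁ p₂ p₃) v := by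
  simp only [Set.mem_insert_iff, Set.mem_singleton_iff, not_or] at hv
  obtain ⟨h₁, h₂, h₃⟩ := hv
  have hdiv : ∀ (m : ℝ) {p : ℝ × ℝ}, v ≠ p → DifferentiableAt ℝ (fun w => m / rdist w p) v :=
    fun m _ h => by
      have := differentiableAt_rdist h
      fun_prop (disch := exact (rdist_pos h).ne')
  have := hdiv m₁ h₁
  have := hdiv m₂ h₂
  have := hdiv m₃ h₃
  unfold Omega
  fun_prop

open RotatingFrame in
theorem unstable_stable_intersection_general (m₁ m₂ m₃ : ℝ) (p₁ p₂ p₃ : ℝ × ℝ)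
    (x₀ : Fin 4 → ℝ) (hx₀ : (x₀ 0, x₀ 2) ∉ ({p₁, p₂, p₃} : Set (ℝ × ℝ)))
    (xu xs : ℝ → Fin 4 → ℝ)
    (hxu : ∀ t : ℝ, HasDerivAt xu (crfbp m₁ m₂ m₃ p₁ p₂ p₃ (xu t)) t)
    (hxuAvoid : ∀ t : ℝ, (xu t 0, xu t 2) ∉ ({p₁, p₂, p₃} : Set (ℝ × ℝ)))
    (hxs : ∀ t : ℝ, HasDerivAt xs (crfbp m₁ m₂ m₃ p₁ p₂ p₃ (xs t)) t)
    (hxsAvoid : ∀ t : ℝ, (xs t 0, xs t 2) ∉ ({p₁, p₂, p₃} : Set (ℝ × ℝ)))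
    (hlimu : Filter.Tendsto xu Filter.atBot (nhds x₀))
    (hlims : Filter.Tendsto xs Filter.atTop (nhds x₀))
    (h0 : xu 0 0 = xs 0 0) (h1 : xu 0 1 = xs 0 1) (h2 : xu 0 2 = xs 0 2)
    (hsign : xu 0 3 * xs 0 3 > 0) :
    xu 0 = xs 0 := by
  have hE : ContinuousAt (jacobi (Omega m₁ m₂ m₃ p₁ p₂ p₃)) x₀ :=
    jacobi_continuousAt (differentiableAt_omega hx₀).continuousAt
  refine eq_of_jacobi_eq (Φ := Omega m₁ m₂ m₃ p₁ p₂ p₃) h0 h1 h2 hsign ?_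
  rw [hE.apply_eq_of_tendsto_of_const hlimu
      (jacobi_comp_eq hxu fun t => differentiableAt_omega (hxuAvoid t)) 0,
    hE.apply_eq_of_tendsto_of_const hlims
      (jacobi_comp_eq hxs fun t => differentiableAt_omega (hxsAvoid t)) 0]

/-- **Mining theorem for homoclinic connections**: if an orbit on the unstable
manifold of `x₀` and an orbit on the stable manifold of `x₀` reach states that
agree in the first three coordinates and whose fourth coordinates share the same
sign, then these states coincide, i.e. the point lies on an orbit homoclinic to
`x₀`. -/
theorem unstable_stable_intersection (m₁ m₂ m₃ : ℝ) (hm₁ : 0 < m₁)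
    (hm₂ : 0 < m₂) (hm₃ : 0 < m₃) (p₁ p₂ p₃ : ℝ × ℝ)
    (h₁₂ : p₁ ≠ p₂) (h₁₃ : p₁ ≠ p₃) (h₂₃ : p₂ ≠ p₃)
    (x₀ : Fin 4 → ℝ) (hx₀ : (x₀ 0, x₀ 2) ∉ ({p₁, p₂, p₃} : Set (ℝ × ℝ)))
    (xu xs : ℝ → Fin 4 → ℝ)
    (hxu : ∀ t : ℝ, HasDerivAt xu (crfbp m₁ m₂ m₃ p₁ p₂ p₃ (xu t)) t)
    (hxuAvoid : ∀ t : ℝ, (xu t 0, xu t 2) ∉ ({p₁, p₂, p₃} : Set (ℝ × ℝ)))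
    (hxs : ∀ t : ℝ, HasDerivAt xs (crfbp m₁ m₂ m₃ p₁ p₂ p₃ (xs t)) t)
    (hxsAvoid : ∀ t : ℝ, (xs t 0, xs t 2) ∉ ({p₁, p₂, p₃} : Set (ℝ × ℝ)))
    (hlimu : Filter.Tendsto xu Filter.atBot (nhds x₀))
    (hlims : Filter.Tendsto xs Filter.atTop (nhds x₀))
    (h0 : xu 0 0 = xs 0 0) (h1 : xu 0 1 = xs 0 1) (h2 : xu 0 2 = xs 0 2)
    (hsign : xu 0 3 * xs 0 3 > 0) :
    xu 0 = xs 0 :=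
  unstable_stable_intersection_general m₁ m₂ m₃ p₁ p₂ p₃ x₀ hx₀ xu xs hxu hxuAvoid hxs hxsAvoid
    hlimu hlims h0 h1 h2 hsign
end

section
/- Work in the algebra of formal power series in two variables over ℂ, and let ∇_rad denote the linear operator on formal power series that multiplies the coefficient of z₁^m z₂^n by (m + n). Let P be a formal power series whose constant coefficient p_{0,0} is nonzero, let α ∈ ℂ, and let q₀ ∈ ℂ. Then there exists a unique formal power series Q with constant coefficient q₀ satisfying P · ∇_rad Q = α · Q · ∇_rad P, where · denotes the Cauchy product of formal power series. -/
/-!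
The equation `P · ∇_rad Q = α Q · ∇_rad P` is linear in `Q`. If `R` vanishes in all total degrees
below `|d|`, the `d`-th coefficient of `P · ∇_rad R - α R · ∇_rad P` is `p₀₀ |d| r_d`: every other
term of the Cauchy product meets a coefficient of `R` of lower degree or the factor `|0| = 0`.
As `p₀₀ |d| ≠ 0` for `d ≠ 0`, the solutions are the fixed points of a map whose `d`-th output
depends only on lower degrees, and such a map has exactly one fixed point, obtained by iteration.
-/

/-- The radial gradient on formal power series in two variables: the linear
operator multiplying the coefficient of `z₁^m z₂^n` by `m + n`. -/
noncomputable def radGrad (P : MvPowerSeries (Fin 2) ℂ) :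
    MvPowerSeries (Fin 2) ℂ :=
  fun d => ((d 0 + d 1 : ℕ) : ℂ) * MvPowerSeries.coeff d P

open MvPowerSeries Finsupp

section Triangular

variable {ι β : Type*}

lemma iterate_eqOn_lt_degree {deg : ι → ℕ} {T : (ι → β) → ι → β}
    (hT : ∀ f g i, (∀ j, deg j < deg i → f j = g j) → T f i = T g i) (f g : ι → β) :
    ∀ n j, deg j < n → T^[n] f j = T^[n] g j := by
  intro n
  induction n with
  | zero => simp
  | succ n ih =>
    intro j hj
    rw [Function.iterate_succ_apply', Function.iterate_succ_apply']
    exact hT _ _ j fun k hk => ih k (by omega)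

theorem existsUnique_isFixedPt_of_lowerTriangular [Nonempty β] (deg : ι → ℕ)
    (T : (ι → β) → ι → β)
    (hT : ∀ f g i, (∀ j, deg j < deg i → f j = g j) → T f i = T g i) :
    ∃! f, Function.IsFixedPt T f := by
  set c : ι → β := fun _ => Classical.arbitrary β
  have hsol : ∀ n j, deg j < n → T^[n] c j = T^[deg j + 1] c j := by
    intro n j hj
    obtain ⟨k, rfl⟩ := Nat.exists_eq_add_of_le hj
    rw [Function.iterate_add_apply]
    exact iterate_eqOn_lt_degree hT _ _ _ j (Nat.lt_succ_self _)
  refine ⟨fun j => T^[deg j + 1] c j, ?_, fun f hf => funext fun j => ?_⟩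
  · funext i
    rw [Function.iterate_succ_apply']
    exact hT _ _ i fun j hj => (hsol _ j hj).symm
  · rw [← hf.iterate (deg j + 1)]
    exact iterate_eqOn_lt_degree hT _ _ _ j (by omega)

end Triangular

section RadialGradient

lemma coeff_radGrad (Q : MvPowerSeries (Fin 2) ℂ) (d : Fin 2 →₀ ℕ) :
    coeff d (radGrad Q) = d.degree * coeff d Q := by
  rw [degree_eq_sum, Fin.sum_univ_two]
  rfl

lemma radGrad_sub (Q R : MvPowerSeries (Fin 2) ℂ) :
    radGrad (Q - R) = radGrad Q - radGrad R := by
  ext d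
  simp only [coeff_radGrad, map_sub, mul_sub]

lemma degree_lt_of_add_eq {σ : Type*} {a b d : σ →₀ ℕ} (h : a + b = d) (ha : a ≠ 0) :
    b.degree < d.degree := by
  have : a.degree ≠ 0 := (degree_eq_zero_iff a).not.mpr ha
  rw [← h, map_add]
  omega

lemma natCast_degree_ne_zero {σ R : Type*} [AddMonoidWithOne R] [CharZero R] {d : σ →₀ ℕ}
    (hd : d ≠ 0) : (d.degree : R) ≠ 0 :=
  Nat.cast_ne_zero.mpr ((degree_eq_zero_iff d).not.mpr hd)

variable {P R : MvPowerSeries (Fin 2) ℂ} {d : Fin 2 →₀ ℕ}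

lemma coeff_mul_radGrad_of_eq_zero_below
    (hR : ∀ e : Fin 2 →₀ ℕ, e.degree < d.degree → coeff e R = 0) :
    coeff d (P * radGrad R) = constantCoeff P * d.degree * coeff d R := by
  classical
  rw [coeff_mul, Finset.sum_eq_single ((0 : Fin 2 →₀ ℕ), d)]
  · rw [coeff_radGrad, coeff_zero_eq_constantCoeff_apply]
    ring
  · rintro ⟨a, b⟩ hab hne
    rw [Finset.HasAntidiagonal.mem_antidiagonal] at hab
    have ha : a ≠ 0 := by
      rintro rfl
      exact hne (by rw [← hab, zero_add])
    rw [coeff_radGrad, hR b (degree_lt_of_add_eq hab ha), mul_zero, mul_zero]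
  · simp

lemma coeff_eq_zero_below_mul_radGrad
    (hR : ∀ e : Fin 2 →₀ ℕ, e.degree < d.degree → coeff e R = 0) :
    coeff d (R * radGrad P) = 0 := by
  classical
  rw [coeff_mul]
  refine Finset.sum_eq_zero fun ⟨a, b⟩ hab => ?_
  rw [Finset.HasAntidiagonal.mem_antidiagonal] at hab
  by_cases hb : b = 0
  · rw [hb, coeff_radGrad, map_zero, Nat.cast_zero, zero_mul, mul_zero]
  · rw [hR a (degree_lt_of_add_eq ((add_comm b a).trans hab) hb), zero_mul]

end RadialGradient

section PowerRecursion

variable (P : MvPowerSeries (Fin 2) ℂ) (α q₀ : ℂ)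

noncomputable def radGradDefect (Q : MvPowerSeries (Fin 2) ℂ) : MvPowerSeries (Fin 2) ℂ :=
  P * radGrad Q - α • (Q * radGrad P)

lemma radGradDefect_sub (Q R : MvPowerSeries (Fin 2) ℂ) :
    radGradDefect P α (Q - R) = radGradDefect P α Q - radGradDefect P α R := by
  simp only [radGradDefect, radGrad_sub, mul_sub, sub_mul, smul_sub]
  abel

lemma coeff_radGradDefect_of_eq_zero_below {R : MvPowerSeries (Fin 2) ℂ} {d : Fin 2 →₀ ℕ}
    (hR : ∀ e : Fin 2 →₀ ℕ, e.degree < d.degree → coeff e R = 0) :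
    coeff d (radGradDefect P α R) = constantCoeff P * d.degree * coeff d R := by
  rw [radGradDefect, map_sub, map_smul, coeff_mul_radGrad_of_eq_zero_below hR,
    coeff_eq_zero_below_mul_radGrad hR, smul_zero, sub_zero]

lemma constantCoeff_radGradDefect (Q : MvPowerSeries (Fin 2) ℂ) :
    constantCoeff (radGradDefect P α Q) = 0 := by
  rw [← coeff_zero_eq_constantCoeff_apply,
    coeff_radGradDefect_of_eq_zero_below P α fun e he => absurd he (Nat.not_lt_zero _),
    map_zero, Nat.cast_zero, mul_zero, zero_mul]

/-- The correction cancels `q_d` against its contribution `p₀₀ |d| q_d` to the defect, so the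
`d`-th coefficient of the output depends only on coefficients of `Q` of lower degree. -/
noncomputable def powerRecursionStep (Q : MvPowerSeries (Fin 2) ℂ) : MvPowerSeries (Fin 2) ℂ :=
  fun d => if d = 0 then q₀ else
    coeff d Q - coeff d (radGradDefect P α Q) / (constantCoeff P * d.degree)

lemma coeff_powerRecursionStep (Q : MvPowerSeries (Fin 2) ℂ) (d : Fin 2 →₀ ℕ) :
    coeff d (powerRecursionStep P α q₀ Q) = if d = 0 then q₀ else
      coeff d Q - coeff d (radGradDefect P α Q) / (constantCoeff P * d.degree) :=
  rfl

variable {P}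

lemma powerRecursionStep_eq_of_eq_below (hP : constantCoeff P ≠ 0)
    (Q R : MvPowerSeries (Fin 2) ℂ) (d : Fin 2 →₀ ℕ)
    (hQR : ∀ e : Fin 2 →₀ ℕ, e.degree < d.degree → coeff e Q = coeff e R) :
    coeff d (powerRecursionStep P α q₀ Q) = coeff d (powerRecursionStep P α q₀ R) := by
  rw [coeff_powerRecursionStep, coeff_powerRecursionStep]
  split_ifs with hd
  · rfl
  have hdeg : (d.degree : ℂ) ≠ 0 := natCast_degree_ne_zero hd
  have hdefect := coeff_radGradDefect_of_eq_zero_below P α (R := Q - R) (d := d)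
    fun e he => by rw [map_sub, hQR e he, sub_self]
  rw [radGradDefect_sub, map_sub, map_sub] at hdefect
  field_simp
  linear_combination -hdefect

lemma isFixedPt_powerRecursionStep_iff (hP : constantCoeff P ≠ 0) (Q : MvPowerSeries (Fin 2) ℂ) :
    Function.IsFixedPt (powerRecursionStep P α q₀) Q ↔
      constantCoeff Q = q₀ ∧ P * radGrad Q = α • (Q * radGrad P) := by
  have hstep_zero : coeff 0 (powerRecursionStep P α q₀ Q) = q₀ := by
    rw [coeff_powerRecursionStep, if_pos rfl]
  have hstep_ne_zero : ∀ d ≠ 0, coeff d (powerRecursionStep P α q₀ Q) = coeff d Q ↔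
      coeff d (radGradDefect P α Q) = 0 := fun d hd => by
    rw [coeff_powerRecursionStep, if_neg hd, sub_eq_self, div_eq_zero_iff,
      or_iff_left (mul_ne_zero hP (natCast_degree_ne_zero hd))]
  rw [← sub_eq_zero (a := P * radGrad Q), ← radGradDefect, Function.IsFixedPt]
  constructor
  · intro hfix
    refine ⟨by rw [← coeff_zero_eq_constantCoeff_apply, ← hstep_zero, hfix], ?_⟩
    ext d
    rcases eq_or_ne d 0 with rfl | hd
    · exact constantCoeff_radGradDefect P α Q
    · exact (hstep_ne_zero d hd).mp (by rw [hfix])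
  · rintro ⟨hconst, hdefect⟩
    ext d
    rcases eq_or_ne d 0 with rfl | hd
    · rw [hstep_zero, ← hconst, coeff_zero_eq_constantCoeff_apply]
    · exact (hstep_ne_zero d hd).mpr (by rw [hdefect, map_zero])

end PowerRecursion

/-- **Well-definedness of the automatic differentiation recursion**: for a
formal power series `P` with nonzero constant coefficient, any `α ∈ ℂ` and any
prescribed constant coefficient `q₀`, there is a unique formal power series `Q`
with constant coefficient `q₀` satisfying `P · ∇_rad Q = α · Q · ∇_rad P`. -/
theorem radGrad_power_recursion_unique (P : MvPowerSeries (Fin 2) ℂ)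
    (hP : MvPowerSeries.constantCoeff P ≠ 0) (α q₀ : ℂ) :
    ∃! Q : MvPowerSeries (Fin 2) ℂ,
      MvPowerSeries.constantCoeff Q = q₀ ∧
        P * radGrad Q = α • (Q * radGrad P) :=
  (existsUnique_congr (isFixedPt_powerRecursionStep_iff α q₀ hP)).mp
    (existsUnique_isFixedPt_of_lowerTriangular Finsupp.degree _
      (powerRecursionStep_eq_of_eq_below α q₀ hP))
end
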